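/- Assume k₁ = k₂ = κ and that none of the following holds: κ = 2; k₃ = 3 − κ; k₃ = 5 − κ; (κ, k₃) = (1, 0). Then every z ∈ V with E′(z) ∈ B and F′(z) ∈ B lies in B. In other words, the 𝔰′-invariant part of H¹(ℂℙ¹, T₂) is zero unless (k₁,k₂,k₃) is of the form (2,2,k₃), (κ,κ,3−κ), (κ,κ,5−κ) or (1,1,0). -/

import Mathlib

noncomputable section

open LaurentPolynomial

/-- `L = ℂ[x, x⁻¹]`, the Laurent polynomials over `ℂ`. -/
abbrev L : Type := LaurentPolynomial ℂ

/-- The coefficient of `x^n` in a Laurent polynomial. -/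
def coeffL (p : L) (n : ℤ) : ℂ := p.coeff n

lemma coeffL_zero (n : ℤ) : coeffL 0 n = 0 := rfl

lemma coeffL_add (a b : L) (n : ℤ) : coeffL (a + b) n = coeffL a n + coeffL b n := by
  unfold coeffL; erw [Finsupp.add_apply]; rfl

lemma coeffL_smul (c : ℂ) (a : L) (n : ℤ) : coeffL (c • a) n = c * coeffL a n := by
  unfold coeffL; erw [Finsupp.smul_apply]; rfl

/-- `L₊`: Laurent polynomials involving only nonnegative powers of `x`. -/
def Lplus : Submodule ℂ L where
  carrier := {p | ∀ n : ℤ, n < 0 → coeffL p n = 0}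
  zero_mem' := fun n _ => coeffL_zero n
  add_mem' := by intro a b ha hb n hn; rw [coeffL_add, ha n hn, hb n hn, add_zero]
  smul_mem' := by intro c p hp n hn; rw [coeffL_smul, hp n hn, mul_zero]

/-- `L₋`: Laurent polynomials involving only nonpositive powers of `x`. -/
def Lminus : Submodule ℂ L where
  carrier := {p | ∀ n : ℤ, 0 < n → coeffL p n = 0}
  zero_mem' := fun n _ => coeffL_zero n
  add_mem' := by intro a b ha hb n hn; rw [coeffL_add, ha n hn, hb n hn, add_zero]
  smul_mem' := by intro c p hp n hn; rw [coeffL_smul, hp n hn, mul_zero]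

/-- The derivative `d/dx` on Laurent polynomials. -/
def D (p : L) : L := Finsupp.sum p.coeff fun n a => ((n : ℂ) * a) • T (n - 1)

/-- `V = L⁶`, the model of Čech 1-cochains with values in `T₂`: a tuple
`v = (a₁₂, a₁₃, a₂₃, b₁, b₂, b₃)` (components `v 0, …, v 5`) encodes the
vector field `Σ_{i<j} a_{ij}(x)ξᵢξⱼ∂/∂x + Σ_t b_t(x)ξ₁ξ₂ξ₃∂/∂ξ_t` on `U₀ ∩ U₁`. -/
abbrev V : Type := Fin 6 → L

/-- `B₀ = (L₊)⁶`: cochains holomorphic in `U₀`. -/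
def B0 : Submodule ℂ V := Submodule.pi Set.univ fun _ => Lplus

/-- The linear map `v ↦ x^m · (v i)`. -/
def cndA (m : ℤ) (i : Fin 6) : V →ₗ[ℂ] L :=
  (LinearMap.mulLeft ℂ (T m)).comp (LinearMap.proj i)

/-- The linear map `v ↦ x^m · (v i − c·x⁻¹·(v j))`. -/
def cndB (m : ℤ) (c : ℂ) (i j : Fin 6) : V →ₗ[ℂ] L :=
  (LinearMap.mulLeft ℂ (T m)).comp
    (LinearMap.proj i - c • (LinearMap.mulLeft ℂ (T (-1))).comp (LinearMap.proj j))

/-- `B₁`: cochains holomorphic in `U₁`, i.e. `v` with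
`x^(kᵢ+kⱼ−2)·a_{ij} ∈ L₋` for all `i < j` and
`x^(d−k_t)·(b_t − σ_t·k_t·x⁻¹·a_{(t)}) ∈ L₋` for `t = 1, 2, 3`
(σ₁ = 1, σ₂ = −1, σ₃ = 1, a₍₁₎ = a₂₃, a₍₂₎ = a₁₃, a₍₃₎ = a₁₂, d = k₁+k₂+k₃). -/
def B1 (k1 k2 k3 : ℤ) : Submodule ℂ V :=
  Lminus.comap (cndA (k1 + k2 - 2) 0) ⊓
  Lminus.comap (cndA (k1 + k3 - 2) 1) ⊓
  Lminus.comap (cndA (k2 + k3 - 2) 2) ⊓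
  Lminus.comap (cndB (k2 + k3) ((k1 : ℂ)) 3 2) ⊓
  Lminus.comap (cndB (k1 + k3) (-(k2 : ℂ)) 4 1) ⊓
  Lminus.comap (cndB (k1 + k2) ((k3 : ℂ)) 5 0)

/-- The coboundary subspace `B = B₀ + B₁`. -/
def B (k1 k2 k3 : ℤ) : Submodule ℂ V := B0 ⊔ B1 k1 k2 k3

/-- Action of `e = ∂/∂x` on cocycles: the componentwise derivative. -/
def Eop : V → V := fun v i => D (v i)

/-- Action of `f = ∂/∂y` on cocycles, with components
`a_{ij} ↦ (2 − kᵢ − kⱼ)·x·a_{ij} − x²·a_{ij}′` and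
`b_t ↦ σ_t·k_t·a₍ₜ₎ − (d − k_t)·x·b_t − x²·b_t′`. -/
def Fop (k1 k2 k3 : ℤ) : V → V := fun v =>
  ![((2 - k1 - k2 : ℤ) : ℂ) • (T 1 * v 0) - T 2 * D (v 0),
    ((2 - k1 - k3 : ℤ) : ℂ) • (T 1 * v 1) - T 2 * D (v 1),
    ((2 - k2 - k3 : ℤ) : ℂ) • (T 1 * v 2) - T 2 * D (v 2),
    (k1 : ℂ) • v 2 - ((k2 + k3 : ℤ) : ℂ) • (T 1 * v 3) - T 2 * D (v 3),
    -((k2 : ℂ) • v 1) - ((k1 + k3 : ℤ) : ℂ) • (T 1 * v 4) - T 2 * D (v 4),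
    (k3 : ℂ) • v 0 - ((k1 + k2 : ℤ) : ℂ) • (T 1 * v 5) - T 2 * D (v 5)]

/-- `N(v) = (0, 0, a₁₃, −b₂, 0, 0)`; `e′ = ∂/∂x + ξ₂∂/∂ξ₁` acts by `E′ = E + N`. -/
def Nop : V → V := fun v => ![0, 0, v 1, -v 4, 0, 0]

/-- `M(v) = (0, a₂₃, 0, 0, −b₁, 0)`; `f′ = ∂/∂y + η₁∂/∂η₂` acts by `F′ = F + M`. -/
def Mop : V → V := fun v => ![0, v 2, 0, 0, -v 3, 0]

/-- The action `E′ = E + N` of `e′ = ∂/∂x + ξ₂∂/∂ξ₁`. -/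
def E'op : V → V := fun v => Eop v + Nop v

/-- The action `F′ = F + M` of `f′ = ∂/∂y + η₁∂/∂η₂`. -/
def F'op (k1 k2 k3 : ℤ) : V → V := fun v => Fop k1 k2 k3 v + Mop v

/-- `N″(v) = (0, a₁₂, a₁₃, −b₂, −b₃, 0)`;
`e″ = ∂/∂x + ξ₂∂/∂ξ₁ + ξ₃∂/∂ξ₂` acts by `E″ = E + N″`. -/
def N''op : V → V := fun v => ![0, v 0, v 1, -v 4, -v 5, 0]

/-- `M″(v) = (2a₁₃, 2a₂₃, 0, 0, −2b₁, −2b₂)`;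
`f″ = ∂/∂y + 2η₁∂/∂η₂ + 2η₂∂/∂η₃` acts by `F″ = F + M″`. -/
def M''op : V → V := fun v => ![(2 : ℂ) • v 1, (2 : ℂ) • v 2, 0, 0, -((2 : ℂ) • v 3), -((2 : ℂ) • v 4)]

/-- The action `E″ = E + N″` of `e″`. -/
def E''op : V → V := fun v => Eop v + N''op v

/-- The action `F″ = F + M″` of `f″`. -/
def F''op (k1 k2 k3 : ℤ) : V → V := fun v => Fop k1 k2 k3 v + M''op v


/-! Membership in `B` splits along the three pairs `(a₁₂, b₃)`, `(a₁₃, b₂)`, `(a₂₃, b₁)`, and for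
each pair it is a finite set of linear conditions on the coefficients of negative degree. `E′` and
`F′` preserve the first pair and couple the other two through `N` and `M`. A coefficient of `z` of
degree `n` is read off from the coefficient of degree `n − 1` of `E′z`, which is `n` times it, or
from the coefficient of degree `n + 1` of `F′z`, which is (weight − `n`) times it, up to coupling
terms; `E′z, F′z ∈ B` control both. The excluded values of `(κ, k₃)` are exactly those for which
these two windows leave a coefficient of `z` undetermined. -/

open Set

lemma coeffL_neg (a : L) (n : ℤ) : coeffL (-a) n = -coeffL a n := by
  simpa using coeffL_smul (-1) a n

lemma coeffL_sub (a b : L) (n : ℤ) : coeffL (a - b) n = coeffL a n - coeffL b n := by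
  rw [sub_eq_add_neg, coeffL_add, coeffL_neg, sub_eq_add_neg]

lemma coeffL_T (m n : ℤ) : coeffL (T m) n = if n = m then 1 else 0 := by
  unfold coeffL; rw [T_apply]; simp [eq_comm]

lemma coeffL_T_mul (m : ℤ) (p : L) (n : ℤ) : coeffL (T m * p) n = coeffL p (n - m) := by
  unfold coeffL T
  erw [AddMonoidAlgebra.coeff_single_mul_apply]
  rw [one_mul, sub_eq_neg_add]

lemma coeffL_D (p : L) (n : ℤ) : coeffL (D p) n = ((n + 1 : ℤ) : ℂ) * coeffL p (n + 1) := by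
  unfold D coeffL
  erw [AddMonoidAlgebra.coeff_finsuppSum, Finsupp.sum_apply]
  have single_coeff (k : ℤ) (a : ℂ) :
      ((((k : ℂ) * a) • T (k - 1) : L)).coeff n = if k = n + 1 then (k : ℂ) * a else 0 := by
    erw [AddMonoidAlgebra.coeff_smul_apply]
    rw [T_apply]
    split_ifs <;> simp_all [sub_eq_iff_eq_add]
  rw [Finsupp.sum_congr (g2 := fun k a => if k = n + 1 then (k : ℂ) * a else 0)
    fun k _ => single_coeff k _, Finsupp.sum_ite_eq' p.coeff (n + 1)]
  split_ifs with h
  · push_cast; rfl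
  · simp [Finsupp.notMem_support_iff.mp h]

lemma mem_Lminus_T_mul_iff (m : ℤ) (p : L) :
    T m * p ∈ Lminus ↔ ∀ n, -m < n → coeffL p n = 0 := by
  refine ⟨fun h n hn => ?_, fun h n hn => ?_⟩
  · have := h (n + m) (by omega)
    rwa [coeffL_T_mul, add_sub_cancel_right] at this
  · rw [coeffL_T_mul]; exact h _ (by omega)

/-- `p ↦ w·x·p − x²·p'`: `∂/∂y` acting on a component of weight `w`, as in `Fop`. -/
def eulerOp (w : ℤ) (p : L) : L := (w : ℂ) • (T 1 * p) - T 2 * D p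

lemma coeffL_eulerOp (w : ℤ) (p : L) (n : ℤ) :
    coeffL (eulerOp w p) n = ((w - n + 1 : ℤ) : ℂ) * coeffL p (n - 1) := by
  rw [eulerOp, coeffL_sub, coeffL_smul, coeffL_T_mul, coeffL_T_mul, coeffL_D,
    show n - 2 + 1 = n - 1 by ring]
  push_cast; ring

def principalPart (p : L) : L := AddMonoidAlgebra.ofCoeff (p.coeff.filter (· < 0))

lemma coeffL_principalPart (p : L) (n : ℤ) :
    coeffL (principalPart p) n = if n < 0 then coeffL p n else 0 := by
  unfold principalPart coeffL
  erw [Finsupp.filter_apply]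

/-- The coboundary condition on one pair `(a, b) = (a_{(t)}, b_t)` of components, with
`m = d − k_t` and `c = σ_t·k_t`: `B` is the product of three such conditions. -/
def IsPairCoboundary (m : ℤ) (c : ℂ) (a b : L) : Prop :=
  ∃ a₀ b₀ a₁ b₁ : L, a₀ ∈ Lplus ∧ b₀ ∈ Lplus ∧ T (m - 2) * a₁ ∈ Lminus ∧
    T m * (b₁ - c • (T (-1) * a₁)) ∈ Lminus ∧ a = a₀ + a₁ ∧ b = b₀ + b₁

lemma coeffL_sub_smul_T_neg_one_mul (c : ℂ) (a b : L) (n : ℤ) :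
    coeffL (b - c • (T (-1) * a)) n = coeffL b n - c * coeffL a (n + 1) := by
  rw [coeffL_sub, coeffL_smul, coeffL_T_mul, sub_neg_eq_add]

lemma isPairCoboundary_of_coeffL {m : ℤ} {c : ℂ} {a b : L}
    (ha : ∀ n ∈ Ioo (2 - m) 0, coeffL a n = 0)
    (hb : ∀ n ∈ Ioc (-m) (-2), coeffL b n = c * coeffL a (n + 1))
    (hedge : 2 < m ∨ 1 < m ∧ c = 0 → coeffL b (-1) = 0) :
    IsPairCoboundary m c a b := by
  -- `α` is the constant term of the `U₁`-part of `a`, which `b₋₁ = c·α` forces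
  set α : ℂ := if 2 < m then 0 else coeffL b (-1) / c
  set a₁ := principalPart a + α • T 0
  have coeffL_a₁ (n : ℤ) : coeffL a₁ n = if n < 0 then coeffL a n else if n = 0 then α else 0 := by
    simp only [a₁, coeffL_add, coeffL_principalPart, coeffL_smul, coeffL_T]
    split_ifs <;> first | omega | ring
  refine ⟨a - a₁, b - principalPart b, a₁, principalPart b, fun n hn => ?_, fun n hn => ?_,
    ?_, ?_, by abel, by abel⟩
  · rw [coeffL_sub, coeffL_a₁, if_pos hn, sub_self]
  · rw [coeffL_sub, coeffL_principalPart, if_pos hn, sub_self]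
  · rw [mem_Lminus_T_mul_iff]
    intro n hn
    rw [coeffL_a₁]
    split_ifs with h h'
    · exact ha n ⟨by omega, h⟩
    · simp [α, show 2 < m by omega]
    · rfl
  · rw [mem_Lminus_T_mul_iff]
    intro n hn
    rw [coeffL_sub_smul_T_neg_one_mul, coeffL_a₁, coeffL_principalPart, sub_eq_zero]
    rcases lt_trichotomy n (-1) with h | rfl | h
    · simp [show n < 0 by omega, show n + 1 < 0 by omega, hb n ⟨hn, by omega⟩]
    · by_cases hm : 2 < m
      · simp [α, hm, hedge (Or.inl hm)]
      · by_cases hc : c = 0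
        · simp [hc, hedge (Or.inr ⟨by omega, hc⟩)]
        · simp [α, hm, mul_div_cancel₀ _ hc]
    · simp [show ¬ n < 0 by omega, show ¬ n + 1 < 0 by omega, show n + 1 ≠ 0 by omega]

theorem isPairCoboundary_iff (m : ℤ) (c : ℂ) (a b : L) :
    IsPairCoboundary m c a b ↔
      (∀ n ∈ Ioo (2 - m) 0, coeffL a n = 0) ∧
      (∀ n ∈ Ioc (-m) (-2), coeffL b n = c * coeffL a (n + 1)) ∧
      (2 < m ∨ 1 < m ∧ c = 0 → coeffL b (-1) = 0) := by
  refine ⟨?_, fun ⟨ha, hb, hedge⟩ => isPairCoboundary_of_coeffL ha hb hedge⟩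
  rintro ⟨a₀, b₀, a₁, b₁, ha₀, hb₀, ha₁, hb₁, rfl, rfl⟩
  rw [mem_Lminus_T_mul_iff] at ha₁ hb₁
  simp only [coeffL_sub_smul_T_neg_one_mul, sub_eq_zero] at hb₁
  simp only [coeffL_add]
  refine ⟨fun n ⟨h, hn⟩ => ?_, fun n ⟨h, hn⟩ => ?_, fun hm => ?_⟩
  · rw [ha₀ n hn, ha₁ n (by omega), add_zero]
  · rw [ha₀ (n + 1) (by omega), hb₀ n (by omega), hb₁ n h, zero_add, zero_add]
  · rw [hb₀ (-1) (by omega), hb₁ (-1) (by omega), zero_add]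
    rcases hm with hm | ⟨-, rfl⟩
    · rw [ha₁ (-1 + 1) (by omega), mul_zero]
    · rw [zero_mul]

theorem mem_B_iff (k1 k2 k3 : ℤ) (v : V) :
    v ∈ B k1 k2 k3 ↔ IsPairCoboundary (k1 + k2) k3 (v 0) (v 5) ∧
      IsPairCoboundary (k1 + k3) (-k2) (v 1) (v 4) ∧ IsPairCoboundary (k2 + k3) k1 (v 2) (v 3) := by
  simp only [B, B1, Submodule.mem_sup, Submodule.mem_inf, Submodule.mem_comap, cndA, cndB,
    LinearMap.comp_apply, LinearMap.sub_apply, LinearMap.smul_apply, LinearMap.proj_apply,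
    LinearMap.mulLeft_apply]
  constructor
  · rintro ⟨u, hu, w, ⟨⟨⟨⟨⟨h0, h1⟩, h2⟩, h3⟩, h4⟩, h5⟩, rfl⟩
    exact ⟨⟨u 0, u 5, w 0, w 5, hu 0 trivial, hu 5 trivial, h0, h5, rfl, rfl⟩,
      ⟨u 1, u 4, w 1, w 4, hu 1 trivial, hu 4 trivial, h1, h4, rfl, rfl⟩,
      ⟨u 2, u 3, w 2, w 3, hu 2 trivial, hu 3 trivial, h2, h3, rfl, rfl⟩⟩
  · rintro ⟨⟨a₀, b₀, a₁, b₁, ha₀, hb₀, ha₁, hb₁, e0, e5⟩,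
      ⟨a₀', b₀', a₁', b₁', ha₀', hb₀', ha₁', hb₁', e1, e4⟩,
      ⟨a₀'', b₀'', a₁'', b₁'', ha₀'', hb₀'', ha₁'', hb₁'', e2, e3⟩⟩
    refine ⟨![a₀, a₀', a₀'', b₀'', b₀', b₀], fun i _ => ?_, ![a₁, a₁', a₁'', b₁'', b₁', b₁],
      ⟨⟨⟨⟨⟨ha₁, ha₁'⟩, ha₁''⟩, hb₁''⟩, hb₁'⟩, hb₁⟩, ?_⟩
    · fin_cases i <;> assumption
    · funext i
      fin_cases i <;> simp [e0, e1, e2, e3, e4, e5]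

theorem E'op_mem_B_iff (k1 k2 k3 : ℤ) (z : V) :
    E'op z ∈ B k1 k2 k3 ↔ IsPairCoboundary (k1 + k2) k3 (D (z 0)) (D (z 5)) ∧
      IsPairCoboundary (k1 + k3) (-k2) (D (z 1)) (D (z 4)) ∧
      IsPairCoboundary (k2 + k3) k1 (D (z 2) + z 1) (D (z 3) - z 4) := by
  rw [mem_B_iff]
  congr! 2 <;> simp [E'op, Eop, Nop, sub_eq_add_neg]

theorem F'op_mem_B_iff (k1 k2 k3 : ℤ) (z : V) :
    F'op k1 k2 k3 z ∈ B k1 k2 k3 ↔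
      IsPairCoboundary (k1 + k2) k3
        (eulerOp (2 - (k1 + k2)) (z 0)) ((k3 : ℂ) • z 0 + eulerOp (-(k1 + k2)) (z 5)) ∧
      IsPairCoboundary (k1 + k3) (-k2)
        (eulerOp (2 - (k1 + k3)) (z 1) + z 2) ((-k2 : ℂ) • z 1 + eulerOp (-(k1 + k3)) (z 4) - z 3) ∧
      IsPairCoboundary (k2 + k3) k1
        (eulerOp (2 - (k2 + k3)) (z 2)) ((k1 : ℂ) • z 2 + eulerOp (-(k2 + k3)) (z 3)) := by
  rw [mem_B_iff]
  refine and_congr ?_ (and_congr ?_ ?_) <;> congr! 1 <;>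
    simp only [F'op, Fop, Mop, eulerOp, Pi.add_apply, Matrix.cons_val] <;> push_cast <;> module

lemma eq_of_intCast_mul_eq {K : Type*} [Field K] [CharZero K] {k : ℤ} (hk : k ≠ 0) {x y : K}
    (h : (k : K) * x = k * y) : x = y :=
  mul_left_cancel₀ (Int.cast_ne_zero.mpr hk) h

lemma coeffL_eq_of_coeffL_eulerOp_succ {m n : ℤ} {c : ℂ} {a b : L} (hn : -m < n)
    (h : coeffL (c • a + eulerOp (-m) b) (n + 1) = c * coeffL (eulerOp (2 - m) a) (n + 1 + 1)) :
    coeffL b n = c * coeffL a (n + 1) := by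
  rw [coeffL_add, coeffL_smul, coeffL_eulerOp, coeffL_eulerOp, add_sub_cancel_right,
    add_sub_cancel_right] at h
  refine eq_of_intCast_mul_eq (k := -m - n) (by omega) ?_
  push_cast at h ⊢
  linear_combination h

lemma coeffL_eq_zero_of_invariant {e : ℤ} (he : e ≠ -2) {p : L}
    (hD : ∀ n ∈ Ioo e 0, coeffL (D p) n = 0) (hF : ∀ n ∈ Ioo e 0, coeffL (eulerOp e p) n = 0) :
    ∀ n ∈ Ioo e 0, coeffL p n = 0 := by
  rintro n ⟨hen, hn⟩
  rcases (show n ≤ -2 ∨ e + 1 < n by omega) with hn' | hn'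
  · have h := hF (n + 1) ⟨by omega, by omega⟩
    rw [coeffL_eulerOp, add_sub_cancel_right] at h
    refine eq_of_intCast_mul_eq (k := e - n) (by omega) ?_
    push_cast at h ⊢
    linear_combination h
  · have h := hD (n - 1) ⟨by omega, by omega⟩
    rw [coeffL_D, sub_add_cancel] at h
    exact eq_of_intCast_mul_eq (k := n) (by omega) (by rw [h, mul_zero])

lemma coeffL_eq_zero_of_coupled_invariant {e : ℤ} (he : e ≠ -3) {p q : L}
    (hDp : ∀ n ∈ Ioo e 0, coeffL (D p) n = 0) (hDq : ∀ n ∈ Ioo e 0, coeffL (D q + p) n = 0)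
    (hFp : ∀ n ∈ Ioo e 0, coeffL (eulerOp e p + q) n = 0)
    (hFq : ∀ n ∈ Ioo e 0, coeffL (eulerOp e q) n = 0) :
    (∀ n ∈ Ioo e 0, coeffL p n = 0) ∧ (∀ n ∈ Ioo e 0, coeffL q n = 0) := by
  have hp : ∀ n, e + 1 < n → n < 0 → coeffL p n = 0 := fun n h₁ h₂ => by
    have h := hDp (n - 1) ⟨by omega, by omega⟩
    rw [coeffL_D, sub_add_cancel] at h
    exact eq_of_intCast_mul_eq (k := n) (by omega) (by rw [h, mul_zero])
  have hq : ∀ n, e < n → n ≤ -2 → coeffL q n = 0 := fun n h₁ h₂ => by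
    have h := hFq (n + 1) ⟨by omega, by omega⟩
    rw [coeffL_eulerOp, add_sub_cancel_right] at h
    refine eq_of_intCast_mul_eq (k := e - n) (by omega) ?_
    push_cast at h ⊢
    linear_combination h
  -- the two coefficients `p_{e+1}` and `q_{-1}` left over are tied by `E` and `F` through the
  -- coupling terms; for `e = -3` the two relations coincide
  constructor
  · rintro n ⟨h₁, h₂⟩
    rcases (show e + 1 < n ∨ n = e + 1 by omega) with h | rfl
    · exact hp n h h₂
    rcases (show e = -2 ∨ e ≤ -4 by omega) with rfl | he'
    · have h := hDq (-1) ⟨by norm_num, by norm_num⟩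
      rw [coeffL_add, coeffL_D] at h
      simpa using h
    · have h := hFp (e + 2) ⟨by omega, by omega⟩
      rw [coeffL_add, coeffL_eulerOp, hq (e + 2) (by omega) (by omega),
        show e + 2 - 1 = e + 1 by ring] at h
      simpa using h
  · rintro n ⟨h₁, h₂⟩
    rcases (show n ≤ -2 ∨ n = -1 by omega) with h | rfl
    · exact hq n h₁ h
    rcases (show e = -2 ∨ e ≤ -4 by omega) with rfl | he'
    · have h := hFp (-1) ⟨by norm_num, by norm_num⟩
      rw [coeffL_add, coeffL_eulerOp] at h
      simpa using h
    · have h := hDq (-2) ⟨by omega, by norm_num⟩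
      rw [coeffL_add, coeffL_D, hp (-2) (by omega) (by norm_num)] at h
      norm_num at h
      exact h

theorem IsPairCoboundary.of_invariant {m : ℤ} {c : ℂ} {a b : L} (hm : m ≠ 4)
    (hmc : ¬(m = 2 ∧ c = 0)) (hE : IsPairCoboundary m c (D a) (D b))
    (hF : IsPairCoboundary m c (eulerOp (2 - m) a) (c • a + eulerOp (-m) b)) :
    IsPairCoboundary m c a b := by
  rw [isPairCoboundary_iff] at hE hF ⊢
  obtain ⟨hEa, hEb, -⟩ := hE
  obtain ⟨hFa, hFb, hFe⟩ := hF
  have ha := coeffL_eq_zero_of_invariant (by omega) hEa hFa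
  refine ⟨ha, fun n ⟨h₁, h₂⟩ => ?_, fun hedge => ?_⟩
  · rcases (show n ≤ -3 ∨ n = -2 by omega) with hn | hn
    · exact coeffL_eq_of_coeffL_eulerOp_succ h₁ (hFb (n + 1) ⟨by omega, by omega⟩)
    · have h := hFe (Or.inl (by omega))
      rw [show (-1 : ℤ) = n + 1 by omega, coeffL_add, coeffL_smul, coeffL_eulerOp,
        add_sub_cancel_right] at h
      have hweight : ((1 - m - n : ℤ) : ℂ) * coeffL a (n + 1) = 0 := by
        rcases (show m = 3 ∨ 4 < m by omega) with rfl | hm'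
        · rw [show 1 - 3 - n = 0 by omega, Int.cast_zero, zero_mul]
        · rw [ha (n + 1) ⟨by omega, by omega⟩, mul_zero]
      refine eq_of_intCast_mul_eq (k := -m - n) (by omega) ?_
      push_cast at h hweight ⊢
      linear_combination h - c * hweight
  · have hm2 : 2 < m := by
      by_contra hm2
      exact hmc ⟨by omega, (hedge.resolve_left hm2).2⟩
    have h := hEb (-2) ⟨by omega, le_rfl⟩
    rw [coeffL_D, coeffL_D] at h
    norm_num at h
    exact h

theorem IsPairCoboundary.of_coupled_invariant {m : ℤ} {c : ℂ} {a₁ b₁ a₂ b₂ : L} (h3 : m ≠ 3)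
    (h5 : m ≠ 5) (hE₁ : IsPairCoboundary m (-c) (D a₁) (D b₁))
    (hE₂ : IsPairCoboundary m c (D a₂ + a₁) (D b₂ - b₁))
    (hF₁ : IsPairCoboundary m (-c) (eulerOp (2 - m) a₁ + a₂) ((-c) • a₁ + eulerOp (-m) b₁ - b₂))
    (hF₂ : IsPairCoboundary m c (eulerOp (2 - m) a₂) (c • a₂ + eulerOp (-m) b₂)) :
    IsPairCoboundary m (-c) a₁ b₁ ∧ IsPairCoboundary m c a₂ b₂ := by
  simp only [isPairCoboundary_iff, neg_eq_zero] at hE₁ hE₂ hF₁ hF₂ ⊢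
  obtain ⟨hE₁a, hE₁b, -⟩ := hE₁
  obtain ⟨hE₂a, -, hE₂e⟩ := hE₂
  obtain ⟨hF₁a, hF₁b, hF₁e⟩ := hF₁
  obtain ⟨hF₂a, hF₂b, hF₂e⟩ := hF₂
  obtain ⟨ha₁, ha₂⟩ := coeffL_eq_zero_of_coupled_invariant (by omega) hE₁a hE₂a hF₁a hF₂a
  have hb₂ : ∀ n ∈ Ioc (-m) (-2), coeffL b₂ n = c * coeffL a₂ (n + 1) := by
    rintro n ⟨h₁, h₂⟩
    rcases (show n ≤ -3 ∨ n = -2 by omega) with hn | hn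
    · exact coeffL_eq_of_coeffL_eulerOp_succ h₁ (hF₂b (n + 1) ⟨by omega, by omega⟩)
    · have h := hF₂e (Or.inl (by omega))
      rw [show (-1 : ℤ) = n + 1 by omega, coeffL_add, coeffL_smul, coeffL_eulerOp,
        add_sub_cancel_right, ha₂ (n + 1) ⟨by omega, by omega⟩, mul_zero, zero_add] at h
      rw [ha₂ (n + 1) ⟨by omega, by omega⟩, mul_zero]
      exact eq_of_intCast_mul_eq (k := -m - (n + 1) + 1) (by omega) (by rw [h, mul_zero])
  have hb₁ : ∀ n ∈ Ioc (-m) (-2), coeffL b₁ n = -c * coeffL a₁ (n + 1) := by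
    rintro n ⟨h₁, h₂⟩
    rcases (show n ≤ -3 ∨ n = -2 by omega) with hn | hn
    · have h := hF₁b (n + 1) ⟨by omega, by omega⟩
      rw [coeffL_sub, coeffL_add, coeffL_add, coeffL_smul, coeffL_eulerOp, coeffL_eulerOp,
        add_sub_cancel_right, add_sub_cancel_right, hb₂ (n + 1) ⟨by omega, by omega⟩] at h
      refine eq_of_intCast_mul_eq (k := -m - n) (by omega) ?_
      push_cast at h ⊢
      linear_combination h
    · have h := hE₁b (n - 1) ⟨by omega, by omega⟩
      rw [coeffL_D, coeffL_D, sub_add_cancel, ha₁ (n + 1) ⟨by omega, by omega⟩, mul_zero,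
        mul_zero] at h
      rw [ha₁ (n + 1) ⟨by omega, by omega⟩, mul_zero]
      exact eq_of_intCast_mul_eq (k := n) (by omega) (by rw [h, mul_zero])
  refine ⟨⟨ha₁, hb₁, fun hedge => ?_⟩, ⟨ha₂, hb₂, fun hedge => ?_⟩⟩
  · have h := hE₂e hedge
    rw [coeffL_sub, coeffL_D] at h
    simpa using h
  · have h := hF₁e hedge
    rw [coeffL_sub, coeffL_add, coeffL_smul, coeffL_eulerOp] at h
    by_cases hm : 2 < m
    · rw [ha₁ (-1) ⟨by omega, by norm_num⟩, hb₁ (-1 - 1) ⟨by omega, by norm_num⟩,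
        ha₁ (-1 - 1 + 1) ⟨by omega, by norm_num⟩] at h
      simpa using h
    · obtain ⟨hm, rfl⟩ := hedge.resolve_left hm
      obtain rfl : m = 2 := by omega
      simpa using h

/-- If `k₁ = k₂ = κ` and none of `κ = 2`, `k₃ = 3 − κ`, `k₃ = 5 − κ`,
`(κ, k₃) = (1, 0)` holds, then the 𝔰′-invariant part of `H¹(ℂℙ¹, T₂)` is zero. -/
theorem stmt_10 (κ k3 : ℤ) (h2 : κ ≠ 2) (h3 : k3 ≠ 3 - κ) (h5 : k3 ≠ 5 - κ)
    (h10 : ¬(κ = 1 ∧ k3 = 0)) :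
    ∀ z : V, E'op z ∈ B κ κ k3 → F'op κ κ k3 z ∈ B κ κ k3 → z ∈ B κ κ k3 := by
  intro z hE hF
  rw [E'op_mem_B_iff] at hE
  rw [F'op_mem_B_iff] at hF
  obtain ⟨hE₀, hE₁, hE₂⟩ := hE
  obtain ⟨hF₀, hF₁, hF₂⟩ := hF
  have h₀ := IsPairCoboundary.of_invariant (by omega)
    (fun ⟨hm, hc⟩ => h10 ⟨by omega, by exact_mod_cast hc⟩) hE₀ hF₀
  obtain ⟨h₁, h₂⟩ := IsPairCoboundary.of_coupled_invariant (by omega) (by omega) hE₁ hE₂ hF₁ hF₂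
  exact (mem_B_iff _ _ _ z).2 ⟨h₀, h₁, h₂⟩
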